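/- Let A = (a_{ij}) be a symmetric real 3×3 matrix, f_i(q) = a_{i1}u + a_{i2}v + a_{i3}w for q = (u,v,w) ∈ ℝ³, let X₁, X₂, X₃ be the first-order differential operators X₁(h) = f₃·∂_v h − f₂·∂_w h, X₂(h) = f₁·∂_w h − f₃·∂_u h, X₃(h) = f₂·∂_u h − f₁·∂_v h on smooth functions h : ℝ³ → ℝ, let p₁, p₂, p₃ ∈ ℝ be constants, P = p₁X₁ + p₂X₂ + p₃X₃, and let B = A·S(p) where S(p) is the antisymmetric matrix with rows (0, −p₃, p₂), (p₃, 0, −p₁), (−p₂, p₁, 0). Then for each i ∈ {1,2,3} and every smooth h: (P∘X_i − X_i∘P)(h) = Σ_{k=1}^{3} B_{k i}·X_k(h). -/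

import Mathlib

/-- The generalized rotation field `X_i` (for `i = 0, 1, 2`, corresponding to
`X₁, X₂, X₃`) attached to the matrix `A`, acting on functions on `ℝ³`;
`f_i = (A ⬝ q) i`. -/
noncomputable def qX (A : Matrix (Fin 3) (Fin 3) ℝ) (i : Fin 3)
    (h : (Fin 3 → ℝ) → ℝ) (q : Fin 3 → ℝ) : ℝ :=
  match i with
  | 0 => A.mulVec q 2 * fderiv ℝ h q (Pi.single 1 1) -
         A.mulVec q 1 * fderiv ℝ h q (Pi.single 2 1)
  | 1 => A.mulVec q 0 * fderiv ℝ h q (Pi.single 2 1) -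
         A.mulVec q 2 * fderiv ℝ h q (Pi.single 0 1)
  | 2 => A.mulVec q 1 * fderiv ℝ h q (Pi.single 0 1) -
         A.mulVec q 0 * fderiv ℝ h q (Pi.single 1 1)

/-- The field `P = p₁X₁ + p₂X₂ + p₃X₃` with constant coefficients. -/
noncomputable def Pop (A : Matrix (Fin 3) (Fin 3) ℝ) (p₁ p₂ p₃ : ℝ)
    (h : (Fin 3 → ℝ) → ℝ) (q : Fin 3 → ℝ) : ℝ :=
  p₁ * qX A 0 h q + p₂ * qX A 1 h q + p₃ * qX A 2 h q

noncomputable def rowCLM (A : Matrix (Fin 3) (Fin 3) ℝ) (k : Fin 3) :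
    (Fin 3 → ℝ) →L[ℝ] ℝ :=
  LinearMap.toContinuousLinearMap ((LinearMap.proj k).comp A.mulVecLin)

lemma rowCLM_single (A : Matrix (Fin 3) (Fin 3) ℝ) (k j : Fin 3) :
    rowCLM A k (Pi.single j 1) = A k j := by
  show A.mulVec (Pi.single j 1) k = A k j
  simp [Matrix.mulVec_single]

lemma hD {h : (Fin 3 → ℝ) → ℝ} (hh : ContDiff ℝ (⊤ : ℕ∞) h) (v : Fin 3 → ℝ) :
    Differentiable ℝ (fun x => fderiv ℝ h x v) :=
  ((hh.fderiv_right (m := 1) (WithTop.coe_le_coe.mpr le_top)).clm_apply contDiff_const).differentiable one_ne_zero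

lemma keyprod (A : Matrix (Fin 3) (Fin 3) ℝ) {h : (Fin 3 → ℝ) → ℝ}
    (hh : ContDiff ℝ (⊤ : ℕ∞) h) (k : Fin 3) (v : Fin 3 → ℝ) (q : Fin 3 → ℝ) :
    HasFDerivAt (fun x => A.mulVec x k * fderiv ℝ h x v)
      (A.mulVec q k • fderiv ℝ (fun x => fderiv ℝ h x v) q
        + fderiv ℝ h q v • rowCLM A k) q := by
  exact (rowCLM A k).hasFDerivAt.mul ((hD hh v q).hasFDerivAt)

lemma symm2 {h : (Fin 3 → ℝ) → ℝ} (hh : ContDiff ℝ (⊤ : ℕ∞) h) (q v w : Fin 3 → ℝ) :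
    fderiv ℝ (fun x => fderiv ℝ h x v) q w =
    fderiv ℝ (fun x => fderiv ℝ h x w) q v := by
  have hd : DifferentiableAt ℝ (fderiv ℝ h) q :=
    ((hh.fderiv_right (m := 1) (WithTop.coe_le_coe.mpr le_top)).differentiable one_ne_zero) q
  have e1 : fderiv ℝ (fun x => fderiv ℝ h x v) q =
      (fderiv ℝ (fderiv ℝ h) q).flip v := by
    rw [fderiv_clm_apply hd (differentiableAt_const v)]
    simp
  have e2 : fderiv ℝ (fun x => fderiv ℝ h x w) q =
      (fderiv ℝ (fderiv ℝ h) q).flip w := by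
    rw [fderiv_clm_apply hd (differentiableAt_const w)]
    simp
  rw [e1, e2]
  exact (hh.contDiffAt.isSymmSndFDerivAt (by rw [minSmoothness_of_isRCLikeNormedField]; exact WithTop.coe_le_coe.mpr le_top)) w v

section
variable (A : Matrix (Fin 3) (Fin 3) ℝ) {h : (Fin 3 → ℝ) → ℝ}
  (q : Fin 3 → ℝ)

lemma hq0 (hh : ContDiff ℝ (⊤ : ℕ∞) h) : HasFDerivAt (qX A 0 h)
    ((A.mulVec q 2 • fderiv ℝ (fun x => fderiv ℝ h x (Pi.single 1 1)) q
        + fderiv ℝ h q (Pi.single 1 1) • rowCLM A 2)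
      - (A.mulVec q 1 • fderiv ℝ (fun x => fderiv ℝ h x (Pi.single 2 1)) q
        + fderiv ℝ h q (Pi.single 2 1) • rowCLM A 1)) q :=
  (keyprod A hh 2 (Pi.single 1 1) q).sub (keyprod A hh 1 (Pi.single 2 1) q)

lemma hq1 (hh : ContDiff ℝ (⊤ : ℕ∞) h) : HasFDerivAt (qX A 1 h)
    ((A.mulVec q 0 • fderiv ℝ (fun x => fderiv ℝ h x (Pi.single 2 1)) q
        + fderiv ℝ h q (Pi.single 2 1) • rowCLM A 0)
      - (A.mulVec q 2 • fderiv ℝ (fun x => fderiv ℝ h x (Pi.single 0 1)) q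
        + fderiv ℝ h q (Pi.single 0 1) • rowCLM A 2)) q :=
  (keyprod A hh 0 (Pi.single 2 1) q).sub (keyprod A hh 2 (Pi.single 0 1) q)

lemma hq2 (hh : ContDiff ℝ (⊤ : ℕ∞) h) : HasFDerivAt (qX A 2 h)
    ((A.mulVec q 1 • fderiv ℝ (fun x => fderiv ℝ h x (Pi.single 0 1)) q
        + fderiv ℝ h q (Pi.single 0 1) • rowCLM A 1)
      - (A.mulVec q 0 • fderiv ℝ (fun x => fderiv ℝ h x (Pi.single 1 1)) q
        + fderiv ℝ h q (Pi.single 1 1) • rowCLM A 0)) q :=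
  (keyprod A hh 1 (Pi.single 0 1) q).sub (keyprod A hh 0 (Pi.single 1 1) q)

end

/-- The Lie derivatives of the fundamental fields relative to `P`:
`[P, X_i] = Σ_k B_{k i} X_k` with `B = A · S(p)`. -/
theorem stmt_14 (A : Matrix (Fin 3) (Fin 3) ℝ) (hA : A.IsSymm)
    (p₁ p₂ p₃ : ℝ) :
    let S : Matrix (Fin 3) (Fin 3) ℝ := !![0, -p₃, p₂; p₃, 0, -p₁; -p₂, p₁, 0]
    let B : Matrix (Fin 3) (Fin 3) ℝ := A * S
    ∀ i : Fin 3, ∀ h : (Fin 3 → ℝ) → ℝ, ContDiff ℝ (⊤ : ℕ∞) h →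
      ∀ q : Fin 3 → ℝ,
        Pop A p₁ p₂ p₃ (qX A i h) q - qX A i (Pop A p₁ p₂ p₃ h) q =
          ∑ k : Fin 3, B k i * qX A k h q := by
  intro S B i h hh q
  have a10 : A 1 0 = A 0 1 := congrFun (congrFun hA.symm 1) 0
  have a20 : A 2 0 = A 0 2 := congrFun (congrFun hA.symm 2) 0
  have a21 : A 2 1 = A 1 2 := congrFun (congrFun hA.symm 2) 1
  have h0 := hq0 A q hh
  have h1 := hq1 A q hh
  have h2 := hq2 A q hh
  have hP : HasFDerivAt (Pop A p₁ p₂ p₃ h) _ q :=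
    ((h0.const_mul p₁).add (h1.const_mul p₂)).add (h2.const_mul p₃)
  have s10 := symm2 hh q (Pi.single 1 1) (Pi.single 0 1)
  have s20 := symm2 hh q (Pi.single 2 1) (Pi.single 0 1)
  have s21 := symm2 hh q (Pi.single 2 1) (Pi.single 1 1)
  fin_cases i
  · simp only [Fin.zero_eta, Fin.mk_one, Fin.reduceFinMk, Pop, qX, h0.fderiv, hP.fderiv, B, S,
      Matrix.mul_apply, Fin.sum_univ_three, Matrix.mulVec, dotProduct,
      ContinuousLinearMap.add_apply, ContinuousLinearMap.sub_apply,
      ContinuousLinearMap.smul_apply, smul_eq_mul, rowCLM_single,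
      Matrix.cons_val', Matrix.cons_val_zero, Matrix.cons_val_one,
      Matrix.head_cons, Matrix.empty_val', Matrix.cons_val_fin_one,
      Matrix.head_fin_const, Matrix.cons_val_two, Matrix.tail_cons, Fin.isValue, Matrix.of_apply, Nat.succ_eq_add_one, Nat.reduceAdd]
    rw [a10, a20, a21, s10, s20, s21]
    ring
  · simp only [Fin.zero_eta, Fin.mk_one, Fin.reduceFinMk, Pop, qX, h1.fderiv, hP.fderiv, B, S,
      Matrix.mul_apply, Fin.sum_univ_three, Matrix.mulVec, dotProduct,
      ContinuousLinearMap.add_apply, ContinuousLinearMap.sub_apply,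
      ContinuousLinearMap.smul_apply, smul_eq_mul, rowCLM_single,
      Matrix.cons_val', Matrix.cons_val_zero, Matrix.cons_val_one,
      Matrix.head_cons, Matrix.empty_val', Matrix.cons_val_fin_one,
      Matrix.head_fin_const, Matrix.cons_val_two, Matrix.tail_cons, Fin.isValue, Matrix.of_apply, Nat.succ_eq_add_one, Nat.reduceAdd]
    rw [a10, a20, a21, s10, s20, s21]
    ring
  · simp only [Fin.zero_eta, Fin.mk_one, Fin.reduceFinMk, Pop, qX, h2.fderiv, hP.fderiv, B, S,
      Matrix.mul_apply, Fin.sum_univ_three, Matrix.mulVec, dotProduct,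
      ContinuousLinearMap.add_apply, ContinuousLinearMap.sub_apply,
      ContinuousLinearMap.smul_apply, smul_eq_mul, rowCLM_single,
      Matrix.cons_val', Matrix.cons_val_zero, Matrix.cons_val_one,
      Matrix.head_cons, Matrix.empty_val', Matrix.cons_val_fin_one,
      Matrix.head_fin_const, Matrix.cons_val_two, Matrix.tail_cons, Fin.isValue, Matrix.of_apply, Nat.succ_eq_add_one, Nat.reduceAdd]
    rw [a10, a20, a21, s10, s20, s21]
    ring
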